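/- The Biggs–Smith graph admits no coherent 9-cycle orientation of level 4; that is, there is no choice, for each 9-cycle of the Biggs–Smith graph, of one of its two directions such that every path v_0, v_1, v_2, v_3 on 4 distinct vertices with consecutive vertices adjacent occurs as a consecutive segment of exactly one chosen directed 9-cycle. -/

import Mathlib

/-!
Five 9-cycles `C₀, …, C₄` of the Biggs–Smith graph form a ring: `Cᵢ` and `Cᵢ₊₁` have different
vertex sets but traverse a common 4-vertex path in the same direction. The representative of
`Cᵢ` chosen by a coherent orientation either keeps the direction of every path of `Cᵢ` or reverses
all of them. If two consecutive representatives made the same choice, they would both traverse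
the common path (or both its reversal), so by uniqueness they would coincide. Hence the choices
alternate around the ring, which is impossible since the ring has odd length.
-/

/-- A directed `g`-cycle of a simple graph `G`: an injective map `c : ZMod g → V`
with `c i` adjacent to `c (i+1)` for all `i`. -/
def IsDirCycleOn {V : Type*} (G : SimpleGraph V) (g : ℕ) (c : ZMod g → V) : Prop :=
  Function.Injective c ∧ ∀ i : ZMod g, G.Adj (c i) (c (i + 1))

/-- A sequence of `k` distinct vertices with consecutive vertices adjacent. -/
def IsPathSeq {V : Type*} (G : SimpleGraph V) (k : ℕ) (v : Fin k → V) : Prop :=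
  Function.Injective v ∧ ∀ (j : ℕ) (h : j + 1 < k),
    G.Adj (v ⟨j, Nat.lt_of_succ_lt h⟩) (v ⟨j + 1, h⟩)

/-- A coherent `g`-cycle orientation of level `k` of `G`: a set `D` of directed
`g`-cycles of `G` containing, for every `g`-cycle of `G`, exactly one of its two
directions (one representative up to rotation), and such that every sequence of `k`
distinct vertices `v 0, …, v (k-1)` with consecutive vertices adjacent occurs as a
consecutive segment `(c i, c (i+1), …, c (i+k-1))` of exactly one `c ∈ D`. -/
def IsCoherentOrientation {V : Type*} (G : SimpleGraph V) (g k : ℕ)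
    (D : Set (ZMod g → V)) : Prop :=
  (∀ c ∈ D, IsDirCycleOn G g c) ∧
  (∀ c : ZMod g → V, IsDirCycleOn G g c →
    ∃! c', c' ∈ D ∧
      ((∃ r : ZMod g, ∀ i, c' i = c (i + r)) ∨ (∃ r : ZMod g, ∀ i, c' i = c (r - i)))) ∧
  (∀ v : Fin k → V, IsPathSeq G k v →
    ∃! c, c ∈ D ∧ ∃ i : ZMod g, ∀ j : Fin k, c (i + ((j : ℕ) : ZMod g)) = v j)

/-- The Biggs–Smith graph on vertex set `{A,B,C,D,E,F} × ZMod 17` (here `A,…,F` are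
`0,…,5 : Fin 6`), with edges `A_i–A_{i+1}`, `C_i–C_{i+4}`, `D_i–D_{i+2}`,
`F_i–F_{i+8}`, `A_i–B_i`, `B_i–C_i`, `B_i–E_i`, `D_i–E_i`, `E_i–F_i`. -/
def biggsSmithGraph : SimpleGraph (Fin 6 × ZMod 17) :=
  SimpleGraph.fromRel (fun p q =>
    (p.1 = 0 ∧ q.1 = 0 ∧ q.2 = p.2 + 1) ∨
    (p.1 = 2 ∧ q.1 = 2 ∧ q.2 = p.2 + 4) ∨
    (p.1 = 3 ∧ q.1 = 3 ∧ q.2 = p.2 + 2) ∨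
    (p.1 = 5 ∧ q.1 = 5 ∧ q.2 = p.2 + 8) ∨
    (p.1 = 0 ∧ q.1 = 1 ∧ q.2 = p.2) ∨
    (p.1 = 1 ∧ q.1 = 2 ∧ q.2 = p.2) ∨
    (p.1 = 1 ∧ q.1 = 4 ∧ q.2 = p.2) ∨
    (p.1 = 3 ∧ q.1 = 4 ∧ q.2 = p.2) ∨
    (p.1 = 4 ∧ q.1 = 5 ∧ q.2 = p.2))

variable {V : Type*} {G : SimpleGraph V} {g k : ℕ}

def Traverses (c : ZMod g → V) (v : Fin k → V) : Prop :=
  ∃ i : ZMod g, ∀ j : Fin k, c (i + ((j : ℕ) : ZMod g)) = v j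

theorem traverses_of_rotation {c C : ZMod g → V} {v : Fin k → V} {r : ZMod g}
    (h : ∀ i, c i = C (i + r)) (hv : Traverses C v) : Traverses c v := by
  obtain ⟨i, hi⟩ := hv
  refine ⟨i - r, fun j => ?_⟩
  rw [h, ← hi]
  ring_nf

theorem traverses_rev_of_reflection {c C : ZMod g → V} {v : Fin k → V} {r : ZMod g}
    (h : ∀ i, c i = C (r - i)) (hv : Traverses C v) : Traverses c (v ∘ Fin.rev) := by
  obtain ⟨i, hi⟩ := hv
  refine ⟨r - i - k + 1, fun j => ?_⟩
  rw [h, Function.comp_apply, ← hi, Fin.val_rev, Nat.cast_sub j.isLt, Nat.cast_succ]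
  ring_nf

theorem IsDirCycleOn.isPathSeq_of_traverses {c : ZMod g → V} {v : Fin k → V}
    (hc : IsDirCycleOn G g c) (hk : k ≤ g) (hv : Traverses c v) : IsPathSeq G k v := by
  obtain ⟨i, hi⟩ := hv
  refine ⟨fun j j' hjj' => ?_, fun j hj => ?_⟩
  · rw [← hi, ← hi] at hjj'
    have hcast := add_left_cancel (hc.1 hjj')
    rw [ZMod.natCast_eq_natCast_iff', Nat.mod_eq_of_lt (j.isLt.trans_le hk),
      Nat.mod_eq_of_lt (j'.isLt.trans_le hk)] at hcast
    exact Fin.ext hcast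
  · rw [← hi, ← hi, Nat.cast_add, Nat.cast_one, ← add_assoc]
    exact hc.2 _

namespace IsCoherentOrientation

variable {D : Set (ZMod g → V)}

theorem eq_of_traverses (hD : IsCoherentOrientation G g k D) (hk : k ≤ g)
    {c c' : ZMod g → V} {v : Fin k → V} (hc : c ∈ D) (hc' : c' ∈ D)
    (hv : Traverses c v) (hv' : Traverses c' v) : c = c' :=
  (hD.2.2 v ((hD.1 c hc).isPathSeq_of_traverses hk hv)).unique ⟨hc, hv⟩ ⟨hc', hv'⟩

theorem exists_representative (hD : IsCoherentOrientation G g k D) {C : ZMod g → V}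
    (hC : IsDirCycleOn G g C) :
    ∃ c ∈ D, Set.range c = Set.range C ∧
      ((∀ v : Fin k → V, Traverses C v → Traverses c v) ∨
        (∀ v : Fin k → V, Traverses C v → Traverses c (v ∘ Fin.rev))) := by
  obtain ⟨c, ⟨hcD, ⟨r, hr⟩ | ⟨r, hr⟩⟩, -⟩ := hD.2.1 C hC
  · refine ⟨c, hcD, ?_, Or.inl fun v => traverses_of_rotation hr⟩
    rw [funext hr]
    exact (Equiv.addRight r).surjective.range_comp C
  · refine ⟨c, hcD, ?_, Or.inr fun v => traverses_rev_of_reflection hr⟩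
    rw [funext hr]
    exact (Equiv.subLeft r).surjective.range_comp C

end IsCoherentOrientation

theorem ZMod.not_forall_succ_iff_not_of_odd {n : ℕ} (hn : Odd n) (P : ZMod n → Prop) :
    ¬ ∀ i, P (i + 1) ↔ ¬ P i := by
  intro h
  have key : ∀ m : ℕ, P m ↔ (P 0 ↔ Even m) := by
    intro m
    induction m with
    | zero => simp
    | succ m ih => rw [Nat.cast_succ, h, ih, Nat.even_add_one]; tauto
  have := key n
  rw [ZMod.natCast_self] at this
  have := Nat.not_even_iff_odd.mpr hn
  tauto

theorem not_exists_isCoherentOrientation_of_odd_ring {n : ℕ} (hk : k ≤ g) (hn : Odd n)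
    (C : ZMod n → ZMod g → V) (p : ZMod n → Fin k → V) (hC : ∀ i, IsDirCycleOn G g (C i))
    (hnew : ∀ i, ∃ j, C (i + 1) j ∉ Set.range (C i))
    (hp : ∀ i, Traverses (C i) (p i) ∧ Traverses (C (i + 1)) (p i)) :
    ¬ ∃ D, IsCoherentOrientation G g k D := by
  rintro ⟨D, hD⟩
  choose c hcD hrange hdir using fun i => hD.exists_representative (hC i)
  have hne : ∀ i, c i ≠ c (i + 1) := fun i he => by
    obtain ⟨j, hj⟩ := hnew i
    apply hj
    rw [← hrange, he, hrange]
    exact ⟨j, rfl⟩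
  refine ZMod.not_forall_succ_iff_not_of_odd hn
    (fun i => ∀ v : Fin k → V, Traverses (C i) v → Traverses (c i) v)
    fun i => ⟨fun hfwd' hfwd => ?_, ?_⟩
  · exact hne i (hD.eq_of_traverses hk (hcD i) (hcD _) (hfwd _ (hp i).1) (hfwd' _ (hp i).2))
  · intro hrev
    refine (hdir (i + 1)).resolve_right fun hrev' => hne i ?_
    exact hD.eq_of_traverses hk (hcD i) (hcD _) ((hdir i).resolve_left hrev _ (hp i).1)
      (hrev' _ (hp i).2)

instance : DecidableRel biggsSmithGraph.Adj := fun a b =>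
  inferInstanceAs (Decidable (a ≠ b ∧ _))

/- In letters: `B₁E₁D₁D₁₆E₁₆B₁₆A₁₆A₀A₁`, `B₁E₁F₁F₉F₀E₀B₀A₀A₁`, `B₁E₁F₁F₁₀F₂E₂B₂A₂A₁`,
`B₁E₁F₁F₁₀E₁₀B₁₀C₁₀C₁₄C₁` and `B₁E₁D₁D₁₆D₁₄E₁₄B₁₄C₁₄C₁`. -/
def biggsSmithRing : ZMod 5 → ZMod 9 → Fin 6 × ZMod 17 :=
  ![![(1, 1), (4, 1), (3, 1), (3, 16), (4, 16), (1, 16), (0, 16), (0, 0), (0, 1)],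
    ![(1, 1), (4, 1), (5, 1), (5, 9), (5, 0), (4, 0), (1, 0), (0, 0), (0, 1)],
    ![(1, 1), (4, 1), (5, 1), (5, 10), (5, 2), (4, 2), (1, 2), (0, 2), (0, 1)],
    ![(1, 1), (4, 1), (5, 1), (5, 10), (4, 10), (1, 10), (2, 10), (2, 14), (2, 1)],
    ![(1, 1), (4, 1), (3, 1), (3, 16), (3, 14), (4, 14), (1, 14), (2, 14), (2, 1)]]

def biggsSmithRingPath : ZMod 5 → Fin 4 → Fin 6 × ZMod 17 :=
  ![![(0, 0), (0, 1), (1, 1), (4, 1)],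
    ![(0, 1), (1, 1), (4, 1), (5, 1)],
    ![(1, 1), (4, 1), (5, 1), (5, 10)],
    ![(2, 14), (2, 1), (1, 1), (4, 1)],
    ![(1, 1), (4, 1), (3, 1), (3, 16)]]

theorem isDirCycleOn_biggsSmithRing (i : ZMod 5) :
    IsDirCycleOn biggsSmithGraph 9 (biggsSmithRing i) := by
  revert i
  unfold IsDirCycleOn
  decide

theorem exists_biggsSmithRing_succ_not_mem_range (i : ZMod 5) :
    ∃ j, biggsSmithRing (i + 1) j ∉ Set.range (biggsSmithRing i) := by
  revert i
  simp only [Set.mem_range]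
  decide

theorem biggsSmithRing_traverses_path (i : ZMod 5) :
    Traverses (biggsSmithRing i) (biggsSmithRingPath i) ∧
      Traverses (biggsSmithRing (i + 1)) (biggsSmithRingPath i) := by
  revert i
  unfold Traverses
  decide

/-- The Biggs–Smith graph admits no coherent 9-cycle orientation of level 4. -/
theorem biggsSmith_no_coherent_orientation :
    ¬ ∃ D : Set (ZMod 9 → Fin 6 × ZMod 17),
      IsCoherentOrientation biggsSmithGraph 9 4 D :=
  not_exists_isCoherentOrientation_of_odd_ring (by norm_num) (by decide) biggsSmithRing
    biggsSmithRingPath isDirCycleOn_biggsSmithRing exists_biggsSmithRing_succ_not_mem_range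
    biggsSmithRing_traverses_path
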